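/- Up to independent positive rescalings in each degree, there is a unique Hermitian inner product on Λ_q(u_+) invariant under the *-algebra U_q(l)-action (i.e. satisfying (v, Xv') = (X*v, v') with E* = KF, F* = EK^{-1}, K* = K). In the ordered bases {1}, {v_1, v_0, v_{-1}}, {v_1∧v_0, v_1∧v_{-1}, v_0∧v_{-1}}, {v_1∧v_0∧v_{-1}}, the Gram matrices are M⁽⁰⁾ = (1), M⁽¹⁾ = diag(1, 1, q²), M⁽²⁾ = diag(1, q⁴, q²), M⁽³⁾ = (1). -/

import Mathlib

open Matrix

noncomputable section

/-- [2]^{1/2} = √(q+q⁻¹). -/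
def rt2 (q : ℝ) : ℝ := Real.sqrt (q + q⁻¹)

/-- K in degree 1 (basis v₁, v₀, v₋₁) and in degree 2
(basis v₁∧v₀, v₁∧v₋₁, v₀∧v₋₁): weights q², 1, q⁻². -/
def Kdeg (q : ℝ) : Matrix (Fin 3) (Fin 3) ℝ := diagonal ![q ^ 2, 1, q⁻¹ ^ 2]

/-- K⁻¹ in degrees 1 and 2. -/
def Kideg (q : ℝ) : Matrix (Fin 3) (Fin 3) ℝ := diagonal ![q⁻¹ ^ 2, 1, q ^ 2]

/-- E in degree 1: E v₀ = [2]^{1/2} v₁, E v₋₁ = [2]^{1/2} v₀. -/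
def Edeg1 (q : ℝ) : Matrix (Fin 3) (Fin 3) ℝ :=
  rt2 q • (single 0 1 1 + single 1 2 1)

/-- F in degree 1: F v₁ = [2]^{1/2} v₀, F v₀ = [2]^{1/2} v₋₁. -/
def Fdeg1 (q : ℝ) : Matrix (Fin 3) (Fin 3) ℝ :=
  rt2 q • (single 1 0 1 + single 2 1 1)

/-- E in degree 2: E(v₁∧v₋₁) = [2]^{1/2} q² v₁∧v₀, E(v₀∧v₋₁) = [2]^{1/2} q⁻² v₁∧v₋₁. -/
def Edeg2 (q : ℝ) : Matrix (Fin 3) (Fin 3) ℝ :=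
  single 0 1 (rt2 q * q ^ 2) + single 1 2 (rt2 q * q⁻¹ ^ 2)

/-- F in degree 2: F(v₁∧v₀) = [2]^{1/2} q⁻² v₁∧v₋₁, F(v₁∧v₋₁) = [2]^{1/2} q² v₀∧v₋₁. -/
def Fdeg2 (q : ℝ) : Matrix (Fin 3) (Fin 3) ℝ :=
  single 1 0 (rt2 q * q⁻¹ ^ 2) + single 2 1 (rt2 q * q ^ 2)

/-
The K-weights q², 1, q⁻² are pairwise distinct, so K-invariance forces both Gram matrices in
degrees 1 and 2 to be diagonal. For a diagonal Gram matrix (m₀, m₁, m₂), the two nonzero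
entries of the E-invariance equation say m₁ = m₀ and m₂ = q² m₁ in degree 1, and
q⁻² m₁ = q² m₀ and q⁻² m₁ = m₂ in degree 2. Degrees 0 and 3 are one-dimensional.
-/

namespace Matrix

theorem isDiag_of_mul_diagonal_eq {n R : Type*} [Fintype n] [DecidableEq n] [CommRing R]
    [NoZeroDivisors R] {d : n → R} (hd : Function.Injective d) {M : Matrix n n R}
    (h : M * diagonal d = diagonal d * M) : M.IsDiag := by
  intro i j hij
  have hentry : M i j * (d j - d i) = 0 := by
    have := congrFun (congrFun h i) j
    rw [mul_diagonal, diagonal_mul] at this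
    linear_combination this
  exact (mul_eq_zero.mp hentry).resolve_right (sub_ne_zero.mpr (hd.ne hij).symm)

theorem eq_smul_one_of_unique {n R : Type*} [Unique n] [DecidableEq n] [Semiring R]
    (M : Matrix n n R) : M = M default default • 1 := by
  ext i j
  simp [Subsingleton.elim i default, Subsingleton.elim j default]

end Matrix

section

variable {q : ℝ}

theorem Kdeg_weights_injective (hq0 : 0 < q) (hq1 : q < 1) :
    Function.Injective ![q ^ 2, 1, q⁻¹ ^ 2] := by
  refine (Fin.strictMono_iff_lt_succ.mpr fun i => ?_).injective
  fin_cases i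
  · simpa using pow_lt_one₀ hq0.le hq1 two_ne_zero
  · simpa using one_lt_pow₀ (one_lt_inv₀ hq0 |>.mpr hq1) two_ne_zero

theorem rt2_ne_zero (hq : 0 < q) : rt2 q ≠ 0 :=
  (Real.sqrt_pos.mpr (by positivity)).ne'

theorem isDiag_of_Kdeg_invariant (hq0 : 0 < q) (hq1 : q < 1) {M : Matrix (Fin 3) (Fin 3) ℝ}
    (hK : M * Kdeg q = (Kdeg q)ᵀ * M) : M.IsDiag := by
  rw [Kdeg, diagonal_transpose] at hK
  exact isDiag_of_mul_diagonal_eq (Kdeg_weights_injective hq0 hq1) hK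

theorem diagonal_eq_of_Edeg1_invariant (hq : 0 < q) {m : Fin 3 → ℝ}
    (hE : diagonal m * Edeg1 q = (Kdeg q * Fdeg1 q)ᵀ * diagonal m) :
    diagonal m = m 0 • diagonal ![1, 1, q ^ 2] := by
  have h01 : m 0 * rt2 q = rt2 q * m 1 := by
    simpa [Edeg1, Fdeg1, Kdeg, mul_apply, Fin.sum_univ_three, single_apply]
      using congrFun (congrFun hE 0) 1
  have h12 : m 1 * rt2 q = rt2 q * (q ^ 2)⁻¹ * m 2 := by
    simpa [Edeg1, Fdeg1, Kdeg, mul_apply, Fin.sum_univ_three, single_apply]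
      using congrFun (congrFun hE 1) 2
  have hr := rt2_ne_zero hq
  have hm1 : m 1 = m 0 := mul_right_cancel₀ hr (by linarith)
  have hm2 : m 2 = q ^ 2 * m 0 := by
    field_simp at h12
    linear_combination -h12 + q ^ 2 * hm1
  rw [← diagonal_smul]
  congr 1
  ext i
  fin_cases i <;> simp [hm1, hm2, mul_comm]

theorem diagonal_eq_of_Edeg2_invariant (hq : 0 < q) {m : Fin 3 → ℝ}
    (hE : diagonal m * Edeg2 q = (Kdeg q * Fdeg2 q)ᵀ * diagonal m) :
    diagonal m = m 0 • diagonal ![1, q ^ 4, q ^ 2] := by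
  have h01 : m 0 * (rt2 q * q ^ 2) = rt2 q * (q ^ 2)⁻¹ * m 1 := by
    simpa [Edeg2, Fdeg2, Kdeg, mul_apply, Fin.sum_univ_three, single_apply]
      using congrFun (congrFun hE 0) 1
  have h12 : m 1 * (rt2 q * (q ^ 2)⁻¹) = rt2 q * m 2 := by
    simpa [Edeg2, Fdeg2, Kdeg, mul_apply, Fin.sum_univ_three, single_apply, hq.ne']
      using congrFun (congrFun hE 1) 2
  field_simp at h01 h12
  have hr := rt2_ne_zero hq
  have hm1 : m 1 = q ^ 4 * m 0 := mul_left_cancel₀ hr (by linear_combination -h01)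
  have hm2 : m 2 = q ^ 2 * m 0 := by
    refine mul_left_cancel₀ (pow_ne_zero 2 hq.ne') ?_
    exact mul_left_cancel₀ hr (by linear_combination -h12 + rt2 q * hm1)
  rw [← diagonal_smul]
  congr 1
  ext i
  fin_cases i <;> simp [hm1, hm2, mul_comm]

end

theorem stmt_14_general (q : ℝ) (hq0 : 0 < q) (hq1 : q < 1)
    (M0 M3 : Matrix (Fin 1) (Fin 1) ℝ) (M1 M2 : Matrix (Fin 3) (Fin 3) ℝ)
    (hM0 : M0.PosDef) (hM1 : M1.PosDef) (hM2 : M2.PosDef) (hM3 : M3.PosDef)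
    (h1K : M1 * Kdeg q = (Kdeg q)ᵀ * M1)
    (h1E : M1 * Edeg1 q = (Kdeg q * Fdeg1 q)ᵀ * M1)
    (h2K : M2 * Kdeg q = (Kdeg q)ᵀ * M2)
    (h2E : M2 * Edeg2 q = (Kdeg q * Fdeg2 q)ᵀ * M2) :
    ∃ c0 c1 c2 c3 : ℝ, 0 < c0 ∧ 0 < c1 ∧ 0 < c2 ∧ 0 < c3 ∧
      M0 = c0 • (1 : Matrix (Fin 1) (Fin 1) ℝ) ∧
      M1 = c1 • diagonal ![1, 1, q ^ 2] ∧
      M2 = c2 • diagonal ![1, q ^ 4, q ^ 2] ∧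
      M3 = c3 • (1 : Matrix (Fin 1) (Fin 1) ℝ) := by
  have hD1 := (isDiag_of_Kdeg_invariant hq0 hq1 h1K).diagonal_diag
  have hD2 := (isDiag_of_Kdeg_invariant hq0 hq1 h2K).diagonal_diag
  rw [← hD1] at h1E ⊢
  rw [← hD2] at h2E ⊢
  exact ⟨_, _, _, _, hM0.diag_pos, hM1.diag_pos, hM2.diag_pos, hM3.diag_pos,
    M0.eq_smul_one_of_unique, diagonal_eq_of_Edeg1_invariant hq0 h1E,
    diagonal_eq_of_Edeg2_invariant hq0 h2E, M3.eq_smul_one_of_unique⟩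

/-- Up to a positive rescaling in each degree, the invariant Hermitian inner product
on Λ_q(u₊) (invariance: (v, Xv') = (X*v, v') with K* = K, E* = KF, F* = EK⁻¹)
is unique, with Gram matrices (1), diag(1,1,q²), diag(1,q⁴,q²), (1). -/
theorem stmt_14 (q : ℝ) (hq0 : 0 < q) (hq1 : q < 1)
    (M0 M3 : Matrix (Fin 1) (Fin 1) ℝ) (M1 M2 : Matrix (Fin 3) (Fin 3) ℝ)
    (hM0 : M0.PosDef) (hM1 : M1.PosDef) (hM2 : M2.PosDef) (hM3 : M3.PosDef)
    (h1K : M1 * Kdeg q = (Kdeg q)ᵀ * M1)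
    (h1E : M1 * Edeg1 q = (Kdeg q * Fdeg1 q)ᵀ * M1)
    (h1F : M1 * Fdeg1 q = (Edeg1 q * Kideg q)ᵀ * M1)
    (h2K : M2 * Kdeg q = (Kdeg q)ᵀ * M2)
    (h2E : M2 * Edeg2 q = (Kdeg q * Fdeg2 q)ᵀ * M2)
    (h2F : M2 * Fdeg2 q = (Edeg2 q * Kideg q)ᵀ * M2) :
    ∃ c0 c1 c2 c3 : ℝ, 0 < c0 ∧ 0 < c1 ∧ 0 < c2 ∧ 0 < c3 ∧
      M0 = c0 • (1 : Matrix (Fin 1) (Fin 1) ℝ) ∧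
      M1 = c1 • diagonal ![1, 1, q ^ 2] ∧
      M2 = c2 • diagonal ![1, q ^ 4, q ^ 2] ∧
      M3 = c3 • (1 : Matrix (Fin 1) (Fin 1) ℝ) :=
  stmt_14_general q hq0 hq1 M0 M3 M1 M2 hM0 hM1 hM2 hM3 h1K h1E h2K h2E
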